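/- Fix M > 0 and E₁, E₂, ℓ₁, ℓ₂ with √(8/9) < E₁ < E₂ < 1 and ℓ_lb(E₂) < ℓ₁ < ℓ₂ < ℓ_ub(E₁), and set B_bound := [E₁, E₂] × [ℓ₁, ℓ₂]. For (E, ℓ) ∈ B_bound, let r₀^Sch(E,ℓ) < r₁^Sch(E,ℓ) denote the two smallest roots in (2M, ∞) of E_ℓ^Sch(r) = E². Then for every (E, ℓ) ∈ B_bound one has r₁^Sch(E,ℓ) − r₀^Sch(E,ℓ) ≥ r₁^Sch(E₂,ℓ₁) − r₀^Sch(E₂,ℓ₁) > 0; in particular there exists η > 0 such that r₁^Sch(E,ℓ) − r₀^Sch(E,ℓ) > 2η for all (E, ℓ) ∈ B_bound. -/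

import Mathlib

/-- The effective potential `E_ℓ^Sch(r) = (1 - 2M/r)(1 + ℓ/r²)`. -/
noncomputable def Esch (M ℓ r : ℝ) : ℝ := (1 - 2*M/r) * (1 + ℓ/r^2)

/-- `r_max^Sch(ℓ)`, the location of the maximum of the effective potential. -/
noncomputable def rmaxSch (M ℓ : ℝ) : ℝ := ℓ/(2*M) * (1 - Real.sqrt (1 - 12*M^2/ℓ))

/-- `r_min^Sch(ℓ)`, the location of the minimum of the effective potential. -/
noncomputable def rminSch (M ℓ : ℝ) : ℝ := ℓ/(2*M) * (1 + Real.sqrt (1 - 12*M^2/ℓ))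

/-- `ℓ_lb(E) = 12M²/(1 - 4α - 8α² + 8α√(α² + α))` with `α = (9/8)E² - 1`. -/
noncomputable def llb (M E : ℝ) : ℝ :=
  12*M^2 / (1 - 4*(9/8*E^2-1) - 8*(9/8*E^2-1)^2
    + 8*(9/8*E^2-1)*Real.sqrt ((9/8*E^2-1)^2 + (9/8*E^2-1)))

/-- `ℓ_ub(E) = 12M²/(1 - 4α - 8α² - 8α√(α² + α))` with `α = (9/8)E² - 1`. -/
noncomputable def lub (M E : ℝ) : ℝ :=
  12*M^2 / (1 - 4*(9/8*E^2-1) - 8*(9/8*E^2-1)^2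
    - 8*(9/8*E^2-1)*Real.sqrt ((9/8*E^2-1)^2 + (9/8*E^2-1)))

/-! `E_ℓ^Sch` has derivative `2M(r - r_max)(r - r_min)/r⁴`, so on `(0, r_min]` it rises up to
`r_max` and falls after it. Hence below `r_min` the superlevel set `{E_ℓ^Sch ≥ E²}` is exactly the
interval `[r₀, r₁]`. Since `E_ℓ^Sch` increases with `ℓ` and `E²` with `E ≥ 0`, for `ℓ ≥ ℓ₁` and
`E ≤ E₂` this set contains the one for `(E₂, ℓ₁)`, so `[r₀, r₁] ⊇ [r₀, r₁](E₂, ℓ₁)`. -/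

open Set

section
variable {M ℓ : ℝ}

lemma rmaxSch_add_rminSch (hM : M ≠ 0) : M * (rmaxSch M ℓ + rminSch M ℓ) = ℓ := by
  unfold rmaxSch rminSch
  field_simp
  ring

lemma rmaxSch_mul_rminSch (hM : 0 < M) (hℓ : 12*M^2 ≤ ℓ) :
    rmaxSch M ℓ * rminSch M ℓ = 3*ℓ := by
  have hℓ0 : 0 < ℓ := lt_of_lt_of_le (by positivity) hℓ
  have hs : Real.sqrt (1 - 12*M^2/ℓ) ^ 2 = 1 - 12*M^2/ℓ :=
    Real.sq_sqrt (by rw [sub_nonneg, div_le_one hℓ0]; exact hℓ)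
  calc rmaxSch M ℓ * rminSch M ℓ = (ℓ/(2*M))^2 * (1 - Real.sqrt (1 - 12*M^2/ℓ) ^ 2) := by
        unfold rmaxSch rminSch; ring
    _ = 3*ℓ := by rw [hs]; field_simp; ring

lemma mul_sub_rmaxSch_mul_sub_rminSch (hM : 0 < M) (hℓ : 12*M^2 ≤ ℓ) (r : ℝ) :
    M * (r - rmaxSch M ℓ) * (r - rminSch M ℓ) = M*r^2 - ℓ*r + 3*M*ℓ := by
  linear_combination M * rmaxSch_mul_rminSch hM hℓ - r * rmaxSch_add_rminSch (ℓ := ℓ) hM.ne'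

lemma rmaxSch_le_rminSch (hM : 0 < M) (hℓ : 12*M^2 ≤ ℓ) : rmaxSch M ℓ ≤ rminSch M ℓ := by
  have hℓ0 : 0 < ℓ := lt_of_lt_of_le (by positivity) hℓ
  unfold rmaxSch rminSch
  gcongr
  linarith [Real.sqrt_nonneg (1 - 12*M^2/ℓ)]

lemma rmaxSch_pos (hM : 0 < M) (hℓ : 12*M^2 ≤ ℓ) : 0 < rmaxSch M ℓ := by
  have hℓ0 : 0 < ℓ := lt_of_lt_of_le (by positivity) hℓ
  have hprod : 0 < rmaxSch M ℓ * rminSch M ℓ := by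
    rw [rmaxSch_mul_rminSch hM hℓ]; positivity
  rcases pos_and_pos_or_neg_and_neg_of_mul_pos hprod with h | h
  · exact h.1
  · nlinarith [rmaxSch_add_rminSch (ℓ := ℓ) hM.ne']

lemma twelve_mul_sq_lt_of_rmaxSch_lt_rminSch (hM : 0 < M) (h : rmaxSch M ℓ < rminSch M ℓ) :
    12*M^2 < ℓ := by
  unfold rmaxSch rminSch at h
  have hs0 := Real.sqrt_nonneg (1 - 12*M^2/ℓ)
  have hprod : 0 < ℓ/(2*M) * Real.sqrt (1 - 12*M^2/ℓ) := by linarith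
  rcases pos_and_pos_or_neg_and_neg_of_mul_pos hprod with ⟨hℓ, hs⟩ | ⟨-, hs⟩
  · have hℓ0 : 0 < ℓ := (div_pos_iff_of_pos_right (by positivity)).1 hℓ
    have := Real.sqrt_pos.1 hs
    rwa [sub_pos, div_lt_one hℓ0] at this
  · linarith

lemma rminSch_le_rminSch (hM : 0 < M) {ℓ' : ℝ} (hℓ' : 12*M^2 ≤ ℓ') (h : ℓ' ≤ ℓ) :
    rminSch M ℓ' ≤ rminSch M ℓ := by
  have hℓ0 : 0 < ℓ' := lt_of_lt_of_le (by positivity) hℓ'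
  have hℓ0' : 0 < ℓ := hℓ0.trans_le h
  unfold rminSch
  gcongr

lemma Esch_le_Esch_of_le (hM : 0 < M) {ℓ' r : ℝ} (h : ℓ' ≤ ℓ) (hr : 2*M ≤ r) :
    Esch M ℓ' r ≤ Esch M ℓ r := by
  have : 0 ≤ 1 - 2*M/r := by rw [sub_nonneg, div_le_one (by linarith)]; exact hr
  unfold Esch
  gcongr

lemma hasDerivAt_Esch (M ℓ : ℝ) {r : ℝ} (hr : r ≠ 0) :
    HasDerivAt (Esch M ℓ) (2*(M*r^2 - ℓ*r + 3*M*ℓ)/r^4) r := by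
  have h := (((hasDerivAt_const r (2*M)).fun_div (hasDerivAt_id' r) hr).const_sub 1).mul
    (((hasDerivAt_const r ℓ).fun_div (hasDerivAt_pow 2 r) (pow_ne_zero 2 hr)).const_add 1)
  refine h.congr_deriv ?_
  field_simp
  ring

lemma strictMonoOn_Esch (hM : 0 < M) (hℓ : 12*M^2 ≤ ℓ) :
    StrictMonoOn (Esch M ℓ) (Ioc 0 (rmaxSch M ℓ)) := by
  refine strictMonoOn_of_deriv_pos (convex_Ioc _ _)
    (fun r hr => (hasDerivAt_Esch M ℓ hr.1.ne').continuousAt.continuousWithinAt) ?_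
  intro r hr
  rw [interior_Ioc] at hr
  obtain ⟨hr0, hr⟩ := hr
  rw [(hasDerivAt_Esch M ℓ hr0.ne').deriv, ← mul_sub_rmaxSch_mul_sub_rminSch hM hℓ]
  have hmin : r < rminSch M ℓ := hr.trans_le (rmaxSch_le_rminSch hM hℓ)
  have := mul_pos_of_neg_of_neg (mul_neg_of_pos_of_neg hM (sub_neg.2 hr)) (sub_neg.2 hmin)
  positivity

lemma strictAntiOn_Esch (hM : 0 < M) (hℓ : 12*M^2 ≤ ℓ) :
    StrictAntiOn (Esch M ℓ) (Icc (rmaxSch M ℓ) (rminSch M ℓ)) := by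
  have hmax := rmaxSch_pos hM hℓ
  refine strictAntiOn_of_deriv_neg (convex_Icc _ _) (fun r hr =>
    (hasDerivAt_Esch M ℓ (hmax.trans_le hr.1).ne').continuousAt.continuousWithinAt) ?_
  intro r hr
  rw [interior_Icc] at hr
  obtain ⟨hr, hmin⟩ := hr
  have hr0 : 0 < r := hmax.trans hr
  rw [(hasDerivAt_Esch M ℓ hr0.ne').deriv, ← mul_sub_rmaxSch_mul_sub_rminSch hM hℓ]
  have := mul_neg_of_pos_of_neg (mul_pos hM (sub_pos.2 hr)) (sub_neg.2 hmin)
  exact div_neg_of_neg_of_pos (by linarith) (by positivity)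

end

/-- `[r₀, r₁]` is the barrier `{E_ℓ^Sch ≥ c}` around `r_max`, see `IsBarrierRoots.le_Esch_iff`. -/
structure IsBarrierRoots (M ℓ c r₀ r₁ : ℝ) : Prop where
  two_mul_lt : 2*M < r₀
  lt_rmaxSch : r₀ < rmaxSch M ℓ
  rmaxSch_lt : rmaxSch M ℓ < r₁
  lt_rminSch : r₁ < rminSch M ℓ
  Esch_left : Esch M ℓ r₀ = c
  Esch_right : Esch M ℓ r₁ = c

namespace IsBarrierRoots
variable {M ℓ c r₀ r₁ : ℝ}

lemma twelve_mul_sq_lt (hM : 0 < M) (h : IsBarrierRoots M ℓ c r₀ r₁) : 12*M^2 < ℓ :=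
  twelve_mul_sq_lt_of_rmaxSch_lt_rminSch hM (h.rmaxSch_lt.trans h.lt_rminSch)

lemma le_Esch_iff (hM : 0 < M) (h : IsBarrierRoots M ℓ c r₀ r₁) {r : ℝ} (hr0 : 0 < r)
    (hr : r ≤ rminSch M ℓ) : c ≤ Esch M ℓ r ↔ r ∈ Icc r₀ r₁ := by
  have hℓ := (h.twelve_mul_sq_lt hM).le
  have hr₀ : 0 < r₀ := by linarith [h.two_mul_lt]
  have mono := strictMonoOn_Esch hM hℓ
  have anti := strictAntiOn_Esch hM hℓ
  constructor
  · intro hc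
    constructor
    · by_contra! hlt
      have := mono ⟨hr0, (hlt.trans h.lt_rmaxSch).le⟩ ⟨hr₀, h.lt_rmaxSch.le⟩ hlt
      linarith [h.Esch_left]
    · by_contra! hlt
      have := anti ⟨h.rmaxSch_lt.le, h.lt_rminSch.le⟩ ⟨(h.rmaxSch_lt.trans hlt).le, hr⟩ hlt
      linarith [h.Esch_right]
  · rintro ⟨h0, h1⟩
    rcases le_total r (rmaxSch M ℓ) with hle | hge
    · exact h.Esch_left ▸ mono.monotoneOn ⟨hr₀, h.lt_rmaxSch.le⟩ ⟨hr0, hle⟩ h0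
    · exact h.Esch_right ▸ anti.antitoneOn ⟨hge, hr⟩ ⟨h.rmaxSch_lt.le, h.lt_rminSch.le⟩ h1

lemma Icc_subset {ℓ₁ c₁ a b : ℝ} (hM : 0 < M) (h₁ : IsBarrierRoots M ℓ₁ c₁ a b)
    (h : IsBarrierRoots M ℓ c r₀ r₁) (hℓ : ℓ₁ ≤ ℓ) (hc : c ≤ c₁) : Icc a b ⊆ Icc r₀ r₁ := by
  intro r hr
  have hr2M : 2*M ≤ r := by linarith [h₁.two_mul_lt, hr.1]
  have hr₁ : r ≤ rminSch M ℓ₁ := hr.2.trans h₁.lt_rminSch.le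
  have hr : r ≤ rminSch M ℓ :=
    hr₁.trans (rminSch_le_rminSch hM (h₁.twelve_mul_sq_lt hM).le hℓ)
  refine (h.le_Esch_iff hM (by linarith) hr).1 ?_
  calc c ≤ c₁ := hc
    _ ≤ Esch M ℓ₁ r := (h₁.le_Esch_iff hM (by linarith) hr₁).2 ‹_›
    _ ≤ Esch M ℓ r := Esch_le_Esch_of_le hM hℓ hr2M

lemma lt (h : IsBarrierRoots M ℓ c r₀ r₁) : r₀ < r₁ :=
  h.lt_rmaxSch.trans h.rmaxSch_lt

lemma sub_le_sub {ℓ₁ c₁ a b : ℝ} (hM : 0 < M) (h₁ : IsBarrierRoots M ℓ₁ c₁ a b)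
    (h : IsBarrierRoots M ℓ c r₀ r₁) (hℓ : ℓ₁ ≤ ℓ) (hc : c ≤ c₁) : b - a ≤ r₁ - r₀ := by
  obtain ⟨ha, hb⟩ := (Icc_subset_Icc_iff h₁.lt.le).1 (h₁.Icc_subset hM h hℓ hc)
  linarith

end IsBarrierRoots

theorem stmt18_general (M E₁ E₂ ℓ₁ ℓ₂ : ℝ) (hM : 0 < M)
    (hE1 : Real.sqrt (8/9) < E₁) (hE12 : E₁ < E₂)
    (hl12 : ℓ₁ < ℓ₂)
    (r0 r1 : ℝ → ℝ → ℝ)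
    (hroots : ∀ E ∈ Set.Icc E₁ E₂, ∀ ℓ ∈ Set.Icc ℓ₁ ℓ₂,
      2*M < r0 E ℓ ∧ r0 E ℓ < rmaxSch M ℓ ∧ rmaxSch M ℓ < r1 E ℓ ∧ r1 E ℓ < rminSch M ℓ ∧
      Esch M ℓ (r0 E ℓ) = E^2 ∧ Esch M ℓ (r1 E ℓ) = E^2) :
    (∀ E ∈ Set.Icc E₁ E₂, ∀ ℓ ∈ Set.Icc ℓ₁ ℓ₂,
       r1 E₂ ℓ₁ - r0 E₂ ℓ₁ ≤ r1 E ℓ - r0 E ℓ) ∧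
    0 < r1 E₂ ℓ₁ - r0 E₂ ℓ₁ ∧
    ∃ η > 0, ∀ E ∈ Set.Icc E₁ E₂, ∀ ℓ ∈ Set.Icc ℓ₁ ℓ₂, 2*η < r1 E ℓ - r0 E ℓ := by
  have hbarrier : ∀ E ∈ Icc E₁ E₂, ∀ ℓ ∈ Icc ℓ₁ ℓ₂,
      IsBarrierRoots M ℓ (E^2) (r0 E ℓ) (r1 E ℓ) := fun E hE ℓ hℓ =>
    let ⟨h₁, h₂, h₃, h₄, h₅, h₆⟩ := hroots E hE ℓ hℓ
    ⟨h₁, h₂, h₃, h₄, h₅, h₆⟩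
  have hE₁ : 0 ≤ E₁ := (Real.sqrt_nonneg _).trans hE1.le
  have h₁ := hbarrier E₂ ⟨hE12.le, le_rfl⟩ ℓ₁ ⟨le_rfl, hl12.le⟩
  have hgap : ∀ E ∈ Icc E₁ E₂, ∀ ℓ ∈ Icc ℓ₁ ℓ₂, r1 E₂ ℓ₁ - r0 E₂ ℓ₁ ≤ r1 E ℓ - r0 E ℓ :=
    fun E hE ℓ hℓ => h₁.sub_le_sub hM (hbarrier E hE ℓ hℓ) hℓ.1
      (pow_le_pow_left₀ (hE₁.trans hE.1) hE.2 2)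
  refine ⟨hgap, sub_pos.2 h₁.lt, (r1 E₂ ℓ₁ - r0 E₂ ℓ₁) / 4, by linarith [sub_pos.2 h₁.lt], ?_⟩
  intro E hE ℓ hℓ
  linarith [hgap E hE ℓ hℓ, sub_pos.2 h₁.lt]

theorem stmt18 (M E₁ E₂ ℓ₁ ℓ₂ : ℝ) (hM : 0 < M)
    (hE1 : Real.sqrt (8/9) < E₁) (hE12 : E₁ < E₂) (hE2 : E₂ < 1)
    (hl1 : llb M E₂ < ℓ₁) (hl12 : ℓ₁ < ℓ₂) (hl2 : ℓ₂ < lub M E₁)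
    (r0 r1 : ℝ → ℝ → ℝ)
    (hroots : ∀ E ∈ Set.Icc E₁ E₂, ∀ ℓ ∈ Set.Icc ℓ₁ ℓ₂,
      2*M < r0 E ℓ ∧ r0 E ℓ < rmaxSch M ℓ ∧ rmaxSch M ℓ < r1 E ℓ ∧ r1 E ℓ < rminSch M ℓ ∧
      Esch M ℓ (r0 E ℓ) = E^2 ∧ Esch M ℓ (r1 E ℓ) = E^2) :
    (∀ E ∈ Set.Icc E₁ E₂, ∀ ℓ ∈ Set.Icc ℓ₁ ℓ₂,
       r1 E₂ ℓ₁ - r0 E₂ ℓ₁ ≤ r1 E ℓ - r0 E ℓ) ∧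
    0 < r1 E₂ ℓ₁ - r0 E₂ ℓ₁ ∧
    ∃ η > 0, ∀ E ∈ Set.Icc E₁ E₂, ∀ ℓ ∈ Set.Icc ℓ₁ ℓ₂, 2*η < r1 E ℓ - r0 E ℓ :=
  stmt18_general M E₁ E₂ ℓ₁ ℓ₂ hM hE1 hE12 hl12 r0 r1 hroots
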